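/- Let k be a field, R = k[x_0,…,x_{n-1}], f_0,…,f_{m-1} ∈ R forms of degree d with k(f_0,…,f_{m-1}) = k(x_0^d, x_1/x_0,…,x_{n-1}/x_0), and let g = g_ℓ x_n^{d−ℓ} + g_{ℓ+1} x_n^{d−ℓ−1} + ⋯ + g_{d−1} x_n + g_d ∈ R[x_n] be a form of degree d with g_j ∈ R homogeneous of degree j and g_ℓ ≠ 0 (so deg_{x_n}(g) = d−ℓ), ℓ ≤ d−1. Then the element x_n/x_0 of k(x_0,…,x_n) is algebraic of degree at most d−ℓ over the subfield k(f_0,…,f_{m-1}, g). -/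

import Mathlib

/-! Put `t = x_n/x_0`. The hypothesis on the `f_j` puts `x_0^d` and every `x_i/x_0` into
`K = k(f, g)`, hence also the dehomogenized slices `c_j = g_j(x/x_0)`. Dividing the form `g` of
degree `d` by `x_0^d` gives `∑ c_j t^{d-j} = g/x_0^d ∈ K`: an equation for `t` over `K` of
degree `d - ℓ` whose leading coefficient `c_ℓ` is nonzero because `g_ℓ` is a nonzero form. -/

open MvPolynomial

/-- The rational function field `k(x_0,…,x_n)`. -/
abbrev RatFuncField (k : Type*) [Field k] (n : ℕ) : Type _ :=
  FractionRing (MvPolynomial (Fin (n + 1)) k)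

/-- A polynomial in `x_0,…,x_n` viewed inside `k(x_0,…,x_n)`. -/
noncomputable def toF {k : Type*} [Field k] {n : ℕ} (p : MvPolynomial (Fin (n + 1)) k) :
    RatFuncField k n :=
  algebraMap (MvPolynomial (Fin (n + 1)) k) (RatFuncField k n) p

/-- The variable `x_i` viewed inside `k(x_0,…,x_n)`. -/
noncomputable def xv {k : Type*} [Field k] {n : ℕ} (i : Fin (n + 1)) : RatFuncField k n :=
  toF (X i)

namespace MvPolynomial.IsHomogeneous

variable {R σ : Type*} [CommSemiring R] {φ : MvPolynomial σ R} {n : ℕ}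

theorem aeval_smul {S : Type*} [CommSemiring S] [Algebra R S] (hφ : φ.IsHomogeneous n) (c : S)
    (v : σ → S) : MvPolynomial.aeval (c • v) φ = c ^ n * MvPolynomial.aeval v φ := by
  conv_lhs => rw [φ.as_sum]
  conv_rhs => rw [φ.as_sum]
  simp only [map_sum, aeval_monomial, Finset.mul_sum]
  refine Finset.sum_congr rfl fun s hs => ?_
  have hdeg : ∑ i ∈ s.support, s i = n := by
    simpa [Finsupp.weight_apply, Finsupp.sum] using hφ (mem_support_iff.mp hs)
  simp only [Finsupp.prod, Pi.smul_apply, smul_eq_mul, mul_pow, Finset.prod_mul_distrib,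
    Finset.prod_pow_eq_pow_sum, hdeg]
  ring

theorem aeval_div {K : Type*} [Field K] [Algebra R K] (hφ : φ.IsHomogeneous n) (v : σ → K)
    (u : K) : MvPolynomial.aeval (fun i => v i / u) φ = MvPolynomial.aeval v φ / u ^ n := by
  have h := hφ.aeval_smul u⁻¹ v
  simp only [Pi.smul_def, smul_eq_mul] at h
  simp only [div_eq_inv_mul, h, inv_pow]

end MvPolynomial.IsHomogeneous

theorem MvPolynomial.isHomogeneous_sum_rename_castSucc_mul_X_last_pow {k : Type*}
    [CommSemiring k] {n d : ℕ} (G : ℕ → MvPolynomial (Fin n) k)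
    (hG : ∀ j, (G j).IsHomogeneous j) (s : Finset ℕ) (hs : ∀ j ∈ s, j ≤ d) :
    (∑ j ∈ s, rename Fin.castSucc (G j) * X (Fin.last n) ^ (d - j)).IsHomogeneous d :=
  IsHomogeneous.sum _ _ _ fun j hj => by
    simpa [Nat.add_sub_cancel' (hs j hj)] using
      ((hG j).rename_isHomogeneous (f := Fin.castSucc)).mul (isHomogeneous_X_pow _ (d - j))

namespace Polynomial

variable {K : Type*} [Semiring K] (c : ℕ → K)

theorem coeff_sum_C_mul_X_pow_sub {ℓ d : ℕ} (hℓ : ℓ ≤ d) :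
    (∑ j ∈ Finset.Icc ℓ d, C (c j) * X ^ (d - j)).coeff (d - ℓ) = c ℓ := by
  rw [finsetSum_coeff, Finset.sum_eq_single ℓ]
  · simp
  · intro j hj hjℓ
    rw [Finset.mem_Icc] at hj
    rw [coeff_C_mul_X_pow, if_neg (by omega)]
  · simp [hℓ]

theorem natDegree_sum_C_mul_X_pow_sub_le (ℓ d : ℕ) :
    (∑ j ∈ Finset.Icc ℓ d, C (c j) * X ^ (d - j)).natDegree ≤ d - ℓ := by
  refine natDegree_sum_le_of_forall_le _ _ fun j hj => ?_
  rw [Finset.mem_Icc] at hj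
  exact (natDegree_C_mul_X_pow_le _ _).trans (by omega)

end Polynomial

theorem exists_aeval_eq_zero_natDegree_le_of_sum_eq {K L : Type*} [CommRing K] [CommRing L]
    [Algebra K L] (c : ℕ → K) {ℓ d : ℕ} (hℓd : ℓ < d) (hc : c ℓ ≠ 0) (t : L) (a : K)
    (h : ∑ j ∈ Finset.Icc ℓ d, algebraMap K L (c j) * t ^ (d - j) = algebraMap K L a) :
    ∃ p : Polynomial K, p ≠ 0 ∧ p.natDegree ≤ d - ℓ ∧ Polynomial.aeval t p = 0 := by
  refine ⟨∑ j ∈ Finset.Icc ℓ d, Polynomial.C (c j) * Polynomial.X ^ (d - j)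
    - Polynomial.C a, fun hp => hc ?_, ?_, ?_⟩
  · have hcoeff := congr_arg (Polynomial.coeff · (d - ℓ)) hp
    simpa [Polynomial.coeff_C, Polynomial.coeff_sum_C_mul_X_pow_sub c hℓd.le,
      show d - ℓ ≠ 0 by omega] using hcoeff
  · exact (Polynomial.natDegree_sub_le _ _).trans
      (max_le (Polynomial.natDegree_sum_C_mul_X_pow_sub_le c ℓ d) (by simp))
  · simp [← h, Polynomial.aeval_def, Polynomial.eval₂_finsetSum]

section RatFuncField

variable {k : Type*} [Field k] {n : ℕ}

theorem toF_eq_aeval (p : MvPolynomial (Fin (n + 1)) k) : toF p = aeval xv p :=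
  DFunLike.congr_fun (aeval_unique (IsScalarTower.toAlgHom k _ (RatFuncField k n))) p

theorem toF_ne_zero {p : MvPolynomial (Fin (n + 1)) k} (hp : p ≠ 0) : toF p ≠ 0 :=
  (map_ne_zero_iff _ (IsFractionRing.injective _ _)).mpr hp

theorem xv_ne_zero (i : Fin (n + 1)) : (xv i : RatFuncField k n) ≠ 0 :=
  toF_ne_zero (X_ne_zero i)

theorem div_xv_zero_mem {d : ℕ} {K : IntermediateField k (RatFuncField k n)}
    (hK : IntermediateField.adjoin k (insert ((xv 0 : RatFuncField k n) ^ d)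
      {y | ∃ i : Fin n, i.castSucc ≠ 0 ∧ y = xv i.castSucc / xv 0}) ≤ K) (i : Fin n) :
    (xv i.castSucc : RatFuncField k n) / xv 0 ∈ K := by
  by_cases hi : i.castSucc = 0
  · simp [hi, div_self (xv_ne_zero (k := k) 0), one_mem]
  · exact hK (IntermediateField.subset_adjoin _ _ (Set.mem_insert_of_mem _ ⟨i, hi, rfl⟩))

theorem aeval_castSucc_div_xv_zero_ne_zero {j : ℕ} {G : MvPolynomial (Fin n) k}
    (hG : G.IsHomogeneous j) (hG0 : G ≠ 0) :
    aeval (fun i => (xv i.castSucc : RatFuncField k n) / xv 0) G ≠ 0 := by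
  have hG' : toF (rename Fin.castSucc G) ≠ 0 :=
    toF_ne_zero ((map_ne_zero_iff _ (rename_injective _ (Fin.castSucc_injective n))).mpr hG0)
  rw [hG.aeval_div]
  refine div_ne_zero ?_ (pow_ne_zero _ (xv_ne_zero 0))
  rwa [toF_eq_aeval, aeval_rename] at hG'

theorem sum_aeval_castSucc_div_xv_zero_mul_pow (G : ℕ → MvPolynomial (Fin n) k)
    (hG : ∀ j, (G j).IsHomogeneous j) (ℓ d : ℕ) :
    ∑ j ∈ Finset.Icc ℓ d, aeval (fun i => (xv i.castSucc : RatFuncField k n) / xv 0) (G j) *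
        (xv (Fin.last n) / xv 0) ^ (d - j) =
      toF (∑ j ∈ Finset.Icc ℓ d, rename Fin.castSucc (G j) * X (Fin.last n) ^ (d - j)) /
        xv 0 ^ d := by
  rw [toF_eq_aeval, ← (isHomogeneous_sum_rename_castSucc_mul_X_last_pow G hG _
    fun j hj => (Finset.mem_Icc.mp hj).2).aeval_div]
  simp [aeval_rename, Function.comp_def]

end RatFuncField

theorem monoid_extension_topological_degree_general
    {k : Type*} [Field k] {n m d ℓ : ℕ} (hd : 1 ≤ d) (hℓ : ℓ ≤ d - 1)
    (f : Fin m → MvPolynomial (Fin n) k)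
    (hbir : IntermediateField.adjoin k
        (Set.range fun j => toF (rename Fin.castSucc (f j) : MvPolynomial (Fin (n + 1)) k)) =
      IntermediateField.adjoin k
        (insert ((xv 0 : RatFuncField k n) ^ d)
          {y : RatFuncField k n | ∃ i : Fin n, i.castSucc ≠ 0 ∧ y = xv i.castSucc / xv 0}))
    (G : ℕ → MvPolynomial (Fin n) k)
    (hG : ∀ j, (G j).IsHomogeneous j) (hGℓ : G ℓ ≠ 0) :
    ∃ p : Polynomial (IntermediateField.adjoin k
        ((Set.range fun j => toF (rename Fin.castSucc (f j) : MvPolynomial (Fin (n + 1)) k)) ∪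
          {toF (∑ j ∈ Finset.Icc ℓ d,
            (rename Fin.castSucc (G j)) * X (Fin.last n) ^ (d - j))})),
      p ≠ 0 ∧ p.natDegree ≤ d - ℓ ∧
        Polynomial.aeval ((xv (Fin.last n) : RatFuncField k n) / xv 0) p = 0 := by
  set g : MvPolynomial (Fin (n + 1)) k :=
    ∑ j ∈ Finset.Icc ℓ d, rename Fin.castSucc (G j) * X (Fin.last n) ^ (d - j)
  set K := IntermediateField.adjoin k
    ((Set.range fun j => toF (rename Fin.castSucc (f j) : MvPolynomial (Fin (n + 1)) k)) ∪
      {toF g})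
  have hF : IntermediateField.adjoin k (insert ((xv 0 : RatFuncField k n) ^ d)
      {y | ∃ i : Fin n, i.castSucc ≠ 0 ∧ y = xv i.castSucc / xv 0}) ≤ K :=
    hbir ▸ IntermediateField.adjoin.mono _ _ _ Set.subset_union_left
  have hg : toF g / xv 0 ^ d ∈ K :=
    div_mem (IntermediateField.subset_adjoin _ _ (Set.mem_union_right _ rfl))
      (hF (IntermediateField.subset_adjoin _ _ (Set.mem_insert _ _)))
  set c : ℕ → K := fun j => aeval (fun i => ⟨_, div_xv_zero_mem hF i⟩) (G j)
  have hc (j : ℕ) : (c j : RatFuncField k n) =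
      aeval (fun i => (xv i.castSucc : RatFuncField k n) / xv 0) (G j) :=
    comp_aeval_apply (f := fun i => (⟨_, div_xv_zero_mem hF i⟩ : K)) K.val (G j)
  refine exists_aeval_eq_zero_natDegree_le_of_sum_eq c (by omega) ?_ _ ⟨_, hg⟩ ?_
  · exact fun h => aeval_castSucc_div_xv_zero_ne_zero (hG ℓ) hGℓ
      (by rw [← hc, h, ZeroMemClass.coe_zero])
  · simpa only [IntermediateField.algebraMap_apply, hc] using
      sum_aeval_castSucc_div_xv_zero_mul_pow G hG ℓ d

/-- if forms `f_0,…,f_{m-1}` of degree `d` in `k[x_0,…,x_{n-1}]` define a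
birational map onto the image, and
`g = g_ℓ x_n^{d−ℓ} + g_{ℓ+1} x_n^{d−ℓ−1} + ⋯ + g_d` with `g_j` homogeneous of degree `j`
and `g_ℓ ≠ 0`, `ℓ ≤ d − 1`, then `x_n/x_0` is algebraic of degree at most `d − ℓ` over
`k(f_0,…,f_{m-1},g)`. -/
theorem monoid_extension_topological_degree
    {k : Type*} [Field k] {n m d ℓ : ℕ} (hn : 1 ≤ n) (hd : 1 ≤ d) (hℓ : ℓ ≤ d - 1)
    (f : Fin m → MvPolynomial (Fin n) k)
    (hf : ∀ j, (f j).IsHomogeneous d)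
    (hbir : IntermediateField.adjoin k
        (Set.range fun j => toF (rename Fin.castSucc (f j) : MvPolynomial (Fin (n + 1)) k)) =
      IntermediateField.adjoin k
        (insert ((xv 0 : RatFuncField k n) ^ d)
          {y : RatFuncField k n | ∃ i : Fin n, i.castSucc ≠ 0 ∧ y = xv i.castSucc / xv 0}))
    (G : ℕ → MvPolynomial (Fin n) k)
    (hG : ∀ j, (G j).IsHomogeneous j) (hGℓ : G ℓ ≠ 0) :
    ∃ p : Polynomial (IntermediateField.adjoin k
        ((Set.range fun j => toF (rename Fin.castSucc (f j) : MvPolynomial (Fin (n + 1)) k)) ∪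
          {toF (∑ j ∈ Finset.Icc ℓ d,
            (rename Fin.castSucc (G j)) * X (Fin.last n) ^ (d - j))})),
      p ≠ 0 ∧ p.natDegree ≤ d - ℓ ∧
        Polynomial.aeval ((xv (Fin.last n) : RatFuncField k n) / xv 0) p = 0 :=
  monoid_extension_topological_degree_general hd hℓ f hbir G hG hGℓ
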